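/- arXiv:1407.4640 — 4 statements merged into one kernel-verified Lean document; each statement's English description precedes it below -/
import Mathlib

section
/- Let r ≥ 1, let y₁, …, y_r be integers with ∑_{i=1}^{r} yᵢ = 0, and let k be a natural number with ⌈log₂ r⌉ < k. Then for every j ∈ ℕ there exists an integer δ with |δ| < r such that ∑_{i=1}^{r} P^k_j(yᵢ) ≡ δ (mod 2^k). -/
/-!
Writing `m = 2^(jk)`, the digit `P k j z` is congruent mod `2^k` to the truncated quotient
`z.tdiv m`. Since the `y i` sum to zero, `m` times the sum of these quotients is minus the sum of the
truncated remainders, each of absolute value below `m`; so that sum of quotients, taken as `δ`, has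
`|δ| < r`.
-/

/-- `P k j z = sign z * (j`-th digit of `|z|` in base `2^k`). -/
def P (k j : ℕ) (z : ℤ) : ℤ := z.sign * ((|z| / 2 ^ (j * k)) % 2 ^ k)

theorem Int.sign_mul_abs_ediv (z m : ℤ) : z.sign * (|z| / m) = z.tdiv m := by
  rcases lt_trichotomy z 0 with hz | rfl | hz
  · rw [Int.sign_eq_neg_one_of_neg hz, abs_of_neg hz, ← Int.tdiv_eq_ediv_of_nonneg (by omega),
      Int.neg_tdiv, neg_one_mul, neg_neg]
  · simp
  · rw [Int.sign_eq_one_of_pos hz, abs_of_pos hz, one_mul, Int.tdiv_eq_ediv_of_nonneg hz.le]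

theorem Int.abs_tmod_lt (a : ℤ) {b : ℤ} (hb : 0 < b) : |a.tmod b| < b :=
  abs_lt.2 ⟨Int.lt_tmod_of_pos a hb, Int.tmod_lt_of_pos a hb⟩

theorem P_modEq_tdiv (k j : ℕ) (z : ℤ) : P k j z ≡ z.tdiv (2 ^ (j * k)) [ZMOD 2 ^ k] := by
  rw [P, ← Int.sign_mul_abs_ediv]
  exact (Int.mod_modEq _ _).mul_left _

theorem abs_sum_tdiv_lt_card {ι : Type*} [Fintype ι] [Nonempty ι] (f : ι → ℤ)
    (hf : ∑ i, f i = 0) {m : ℤ} (hm : 0 < m) :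
    |∑ i, (f i).tdiv m| < Fintype.card ι := by
  have hrem : (∑ i, (f i).tdiv m) * m = -∑ i, (f i).tmod m := by
    rw [Finset.sum_mul, eq_neg_iff_add_eq_zero, ← Finset.sum_add_distrib, ← hf]
    simp only [Int.tdiv_mul_add_tmod]
  refine lt_of_mul_lt_mul_right ?_ hm.le
  calc |∑ i, (f i).tdiv m| * m = |(∑ i, (f i).tdiv m) * m| := by rw [abs_mul, abs_of_pos hm]
    _ = |∑ i, (f i).tmod m| := by rw [hrem, abs_neg]
    _ ≤ ∑ i, |(f i).tmod m| := Finset.abs_sum_le_sum_abs _ _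
    _ < ∑ _i : ι, m := Finset.sum_lt_sum_of_nonempty Finset.univ_nonempty
        fun i _ => Int.abs_tmod_lt _ hm
    _ = Fintype.card ι * m := by simp

theorem digit_sum_small_mod_general
    (r : ℕ) (hr : 1 ≤ r) (y : Fin r → ℤ) (hsum : ∑ i, y i = 0)
    (k : ℕ) :
    ∀ j : ℕ, ∃ δ : ℤ, |δ| < (r : ℤ) ∧
      (2 ^ k : ℤ) ∣ (∑ i, P k j (y i)) - δ := by
  intro j
  have : Nonempty (Fin r) := ⟨⟨0, hr⟩⟩
  refine ⟨∑ i, (y i).tdiv (2 ^ (j * k)), ?_, ?_⟩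
  · simpa using abs_sum_tdiv_lt_card y hsum (by positivity : (0 : ℤ) < 2 ^ (j * k))
  · exact (Int.ModEq.sum fun i _ => P_modEq_tdiv k j (y i)).symm.dvd

theorem digit_sum_small_mod
    (r : ℕ) (hr : 1 ≤ r) (y : Fin r → ℤ) (hsum : ∑ i, y i = 0)
    (k : ℕ) (hk : Nat.clog 2 r < k) :
    ∀ j : ℕ, ∃ δ : ℤ, |δ| < (r : ℤ) ∧
      (2 ^ k : ℤ) ∣ (∑ i, P k j (y i)) - δ :=
  digit_sum_small_mod_general r hr y hsum k
end

section
/- Let r ≥ 1, let y₁, …, y_r be integers with ∑_{i=1}^{r} yᵢ = 0, and let t, k be natural numbers with ⌈log₂ r⌉ < t and ⌈log₂ r⌉ < k. For each i set ỹᵢ = sign(yᵢ) · ⌊|yᵢ| / 2^t⌋ (the arithmetic right shift of yᵢ by t bits). Then for every j ∈ ℕ there exists an integer δ with |δ| < r such that ∑_{i=1}^{r} P^k_j(ỹᵢ) ≡ δ (mod 2^k). -/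
namespace Int

theorem sign_mul_abs_ediv_s2 (z n : ℤ) : z.sign * (|z| / n) = z.tdiv n := by
  rcases lt_trichotomy z 0 with h | rfl | h
  · rw [sign_eq_neg_one_of_neg h, abs_of_neg h, ← tdiv_eq_ediv_of_nonneg (by omega),
      Int.neg_tdiv]
    ring
  · simp
  · rw [sign_eq_one_of_pos h, abs_of_pos h, tdiv_eq_ediv_of_nonneg h.le, one_mul]

theorem tdiv_tdiv_of_nonneg (z : ℤ) {b : ℤ} (hb : 0 ≤ b) (c : ℤ) :
    (z.tdiv b).tdiv c = z.tdiv (b * c) := by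
  obtain ⟨n, rfl | rfl⟩ := Int.eq_nat_or_neg z <;>
  simp only [Int.neg_tdiv, natCast_tdiv_eq_ediv,
    tdiv_eq_ediv_of_nonneg (ediv_nonneg (natCast_nonneg n) hb), ediv_ediv_of_nonneg hb]

theorem abs_tmod_le_sub_one (a : ℤ) {b : ℤ} (hb : 0 < b) : |a.tmod b| ≤ b - 1 := by
  have := tmod_lt_of_pos a hb
  have := lt_tmod_of_pos a hb
  rw [abs_le]
  constructor <;> omega

end Int

theorem P_neg (k j : ℕ) (z : ℤ) : P k j (-z) = -P k j z := by
  simp only [P, Int.sign_neg, abs_neg, neg_mul]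

theorem P_of_nonneg (k j : ℕ) {z : ℤ} (hz : 0 ≤ z) : P k j z = z / 2 ^ (j * k) % 2 ^ k := by
  rcases hz.eq_or_lt with rfl | hz
  · simp [P]
  · rw [P, Int.sign_eq_one_of_pos hz, abs_of_pos hz, one_mul]

theorem P_eq_tmod_tdiv (k j : ℕ) (z : ℤ) : P k j z = (z.tdiv (2 ^ (j * k))).tmod (2 ^ k) := by
  have hq (n : ℕ) : (0 : ℤ) ≤ n / 2 ^ (j * k) := Int.ediv_nonneg n.cast_nonneg (by positivity)
  obtain ⟨n, rfl | rfl⟩ := Int.eq_nat_or_neg z <;>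
  simp only [P_neg, Int.neg_tdiv, Int.neg_tmod, P_of_nonneg k j n.cast_nonneg,
    Int.natCast_tdiv_eq_ediv, Int.tmod_eq_emod_of_nonneg (hq n)]

theorem abs_sum_tdiv_lt_card_s2 {ι : Type*} {s : Finset ι} (hs : s.Nonempty) (y : ι → ℤ)
    (hy : ∑ i ∈ s, y i = 0) {n : ℤ} (hn : 0 < n) : |∑ i ∈ s, (y i).tdiv n| < s.card := by
  have hmul : n * ∑ i ∈ s, (y i).tdiv n = -∑ i ∈ s, (y i).tmod n := by
    simp only [Finset.mul_sum, Int.mul_tdiv_self, Finset.sum_sub_distrib, hy, zero_sub]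
  have hbound : n * |∑ i ∈ s, (y i).tdiv n| ≤ s.card * (n - 1) :=
    calc n * |∑ i ∈ s, (y i).tdiv n| = |∑ i ∈ s, (y i).tmod n| := by
          rw [← abs_neg (∑ i ∈ s, (y i).tmod n), ← hmul, abs_mul, abs_of_pos hn]
      _ ≤ ∑ i ∈ s, |(y i).tmod n| := Finset.abs_sum_le_sum_abs _ _
      _ ≤ ∑ i ∈ s, (n - 1) := Finset.sum_le_sum fun i _ => Int.abs_tmod_le_sub_one _ hn
      _ = s.card * (n - 1) := by rw [Finset.sum_const, nsmul_eq_mul]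
  have hcard : (0 : ℤ) < s.card := by exact_mod_cast hs.card_pos
  nlinarith

theorem digit_sum_small_mod_of_shift_general
    (r : ℕ) (hr : 1 ≤ r) (y : Fin r → ℤ) (hsum : ∑ i, y i = 0)
    (t k : ℕ) :
    ∀ j : ℕ, ∃ δ : ℤ, |δ| < (r : ℤ) ∧
      (2 ^ k : ℤ) ∣ (∑ i, P k j ((y i).sign * (|y i| / 2 ^ t))) - δ := by
  intro j
  have hN : (0 : ℤ) < 2 ^ t * 2 ^ (j * k) := by positivity
  refine ⟨∑ i, (y i).tdiv (2 ^ t * 2 ^ (j * k)), ?_, ?_⟩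
  · simpa only [Finset.card_univ, Fintype.card_fin] using
      abs_sum_tdiv_lt_card_s2 ⟨⟨0, hr⟩, Finset.mem_univ _⟩ y hsum hN
  · simp only [Int.sign_mul_abs_ediv_s2, P_eq_tmod_tdiv, ← Finset.sum_sub_distrib,
      Int.tdiv_tdiv_of_nonneg _ (by positivity : (0 : ℤ) ≤ 2 ^ t)]
    exact Finset.dvd_sum fun i _ => Int.dvd_tmod_sub_self

theorem digit_sum_small_mod_of_shift
    (r : ℕ) (hr : 1 ≤ r) (y : Fin r → ℤ) (hsum : ∑ i, y i = 0)
    (t k : ℕ) (ht : Nat.clog 2 r < t) (hk : Nat.clog 2 r < k) :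
    ∀ j : ℕ, ∃ δ : ℤ, |δ| < (r : ℤ) ∧
      (2 ^ k : ℤ) ∣ (∑ i, P k j ((y i).sign * (|y i| / 2 ^ t))) - δ :=
  digit_sum_small_mod_of_shift_general r hr y hsum t k
end

section
/- Let r ≥ 1, let y₁, …, y_r be integers with ∑_{i=1}^{r} yᵢ = 0, and let k ≥ 1 and j be natural numbers. Then 2^{(j+1)·k} divides 2^{j·k} · ∑_{i=1}^{r} P^k_j(yᵢ) + ∑_{i=1}^{r} sign(yᵢ) · (|yᵢ| mod 2^{j·k}). -/
theorem Int.emod_add_mul_ediv_emod_modEq (a b c : ℤ) :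
    a % b + b * (a / b % c) ≡ a [ZMOD b * c] := by
  refine Int.modEq_iff_dvd.mpr ⟨a / b / c, ?_⟩
  linear_combination (Int.mul_ediv_add_emod a b).symm - b * Int.mul_ediv_add_emod (a / b) c

theorem Int.sign_mul_emod_add_mul_ediv_emod_modEq (z b c : ℤ) :
    z.sign * (|z| % b) + b * (z.sign * (|z| / b % c)) ≡ z [ZMOD b * c] := by
  have h := (Int.emod_add_mul_ediv_emod_modEq |z| b c).mul_left z.sign
  rwa [Int.sign_mul_abs, mul_add, mul_left_comm] at h

theorem two_pow_mul_P_add_sign_mul_emod_modEq (k j : ℕ) (z : ℤ) :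
    2 ^ (j * k) * P k j z + z.sign * (|z| % 2 ^ (j * k)) ≡ z [ZMOD 2 ^ ((j + 1) * k)] := by
  rw [add_one_mul, pow_add, add_comm]
  exact Int.sign_mul_emod_add_mul_ediv_emod_modEq z _ _

theorem key_congruence_general
    (r : ℕ) (y : Fin r → ℤ) (hsum : ∑ i, y i = 0)
    (k : ℕ) (j : ℕ) :
    (2 ^ ((j + 1) * k) : ℤ) ∣
      2 ^ (j * k) * (∑ i, P k j (y i)) +
        ∑ i, (y i).sign * (|y i| % 2 ^ (j * k)) := by
  rw [Finset.mul_sum, ← Finset.sum_add_distrib, ← Int.modEq_zero_iff_dvd, ← hsum]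
  exact Int.ModEq.sum fun i _ => two_pow_mul_P_add_sign_mul_emod_modEq k j (y i)

theorem key_congruence
    (r : ℕ) (hr : 1 ≤ r) (y : Fin r → ℤ) (hsum : ∑ i, y i = 0)
    (k : ℕ) (hk : 1 ≤ k) (j : ℕ) :
    (2 ^ ((j + 1) * k) : ℤ) ∣
      2 ^ (j * k) * (∑ i, P k j (y i)) +
        ∑ i, (y i).sign * (|y i| % 2 ^ (j * k)) :=
  key_congruence_general r y hsum k j
end

section
/- Let r ≥ 1, let y₁, …, y_r be integers with ∑_{i=1}^{r} yᵢ = 0, let t, j be natural numbers and k ≥ 1. For each i set ỹᵢ = sign(yᵢ) · ⌊|yᵢ| / 2^t⌋. Then 2^{t+(j+1)·k} divides 2^{t+j·k} · ∑_{i=1}^{r} P^k_j(ỹᵢ) + ∑_{i=1}^{r} sign(yᵢ) · (|yᵢ| mod 2^{t+j·k}). -/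
theorem Int.emod_mul_of_nonneg {a : ℤ} (x b : ℤ) (ha : 0 ≤ a) :
    x % (a * b) = x % a + a * (x / a % b) := by
  rw [Int.emod_def, Int.emod_def, Int.emod_def, Int.ediv_ediv_of_nonneg ha]
  ring

theorem Int.sign_mul_abs_emod_modEq (y m : ℤ) : y.sign * (|y| % m) ≡ y [ZMOD m] :=
  calc y.sign * (|y| % m) ≡ y.sign * |y| [ZMOD m] := (Int.mod_modEq _ _).mul_left _
    _ = y := Int.sign_mul_abs y

theorem P_sign_mul_of_nonneg (k j : ℕ) (y : ℤ) {q : ℤ} (hq : 0 ≤ q) :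
    P k j (y.sign * q) = y.sign * (q / 2 ^ (j * k) % 2 ^ k) := by
  rcases hq.eq_or_lt with rfl | hq
  · simp [P]
  rcases lt_trichotomy y 0 with hy | rfl | hy <;>
    simp [P, Int.sign_eq_neg_one_of_neg, Int.sign_eq_one_of_pos, abs_of_pos, *]

theorem P_sign_mul_abs_ediv_two_pow (k j t : ℕ) (y : ℤ) :
    P k j (y.sign * (|y| / 2 ^ t)) = y.sign * (|y| / 2 ^ (t + j * k) % 2 ^ k) := by
  rw [P_sign_mul_of_nonneg _ _ _ (by positivity), Int.ediv_ediv_of_nonneg (by positivity),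
    pow_add]

theorem two_pow_mul_P_add_sign_mul_emod (k j t : ℕ) (y : ℤ) :
    2 ^ (t + j * k) * P k j (y.sign * (|y| / 2 ^ t)) + y.sign * (|y| % 2 ^ (t + j * k)) =
      y.sign * (|y| % 2 ^ (t + (j + 1) * k)) := by
  rw [P_sign_mul_abs_ediv_two_pow, show t + (j + 1) * k = t + j * k + k by ring,
    pow_add 2 (t + j * k) k, Int.emod_mul_of_nonneg _ _ (by positivity)]
  ring

theorem key_congruence_shift_general
    (r : ℕ) (y : Fin r → ℤ) (hsum : ∑ i, y i = 0)
    (t j k : ℕ) :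
    (2 ^ (t + (j + 1) * k) : ℤ) ∣
      2 ^ (t + j * k) * (∑ i, P k j ((y i).sign * (|y i| / 2 ^ t))) +
        ∑ i, (y i).sign * (|y i| % 2 ^ (t + j * k)) := by
  rw [Finset.mul_sum, ← Finset.sum_add_distrib]
  simp_rw [two_pow_mul_P_add_sign_mul_emod]
  rw [← Int.modEq_zero_iff_dvd, ← hsum]
  exact Int.ModEq.sum fun i _ ↦ Int.sign_mul_abs_emod_modEq (y i) _

theorem key_congruence_shift
    (r : ℕ) (hr : 1 ≤ r) (y : Fin r → ℤ) (hsum : ∑ i, y i = 0)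
    (t j k : ℕ) (hk : 1 ≤ k) :
    (2 ^ (t + (j + 1) * k) : ℤ) ∣
      2 ^ (t + j * k) * (∑ i, P k j ((y i).sign * (|y i| / 2 ^ t))) +
        ∑ i, (y i).sign * (|y i| % 2 ^ (t + j * k)) :=
  key_congruence_shift_general r y hsum t j k
end
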